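/- arXiv:1304.5602 — 3 statements merged into one kernel-verified Lean document; each statement's English description precedes it below -/
import Mathlib

section
/- Let Z be a comparison between interpretations I and I' that additionally satisfies the nominal condition: Z(x,x') and x = a^I imply x' = a^{I'}. Then semi-positive concepts extended with nominals {a} are preserved by Z. -/
structure Interp (CN RN IN : Type) (D : Type) where
  cI : CN → D → Prop
  rI : RN → D → D → Prop
  iI : IN → D

/-- Semi-positive concepts extended with nominals `{a}`. -/
inductive SPO (CN RN IN : Type) : Type where
  | top : SPO CN RN IN
  | bot : SPO CN RN IN
  | atom : CN → SPO CN RN IN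
  | nom : IN → SPO CN RN IN
  | or : SPO CN RN IN → SPO CN RN IN → SPO CN RN IN
  | and : SPO CN RN IN → SPO CN RN IN → SPO CN RN IN
  | ex : RN → SPO CN RN IN → SPO CN RN IN
  | all : RN → SPO CN RN IN → SPO CN RN IN

def SPO.sem {CN RN IN D : Type} (I : Interp CN RN IN D) : SPO CN RN IN → D → Prop
  | .top => fun _ => True
  | .bot => fun _ => False
  | .atom A => I.cI A
  | .nom a => fun x => x = I.iI a
  | .or C₁ C₂ => fun x => C₁.sem I x ∨ C₂.sem I x
  | .and C₁ C₂ => fun x => C₁.sem I x ∧ C₂.sem I x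
  | .ex r C => fun x => ∃ y, I.rI r x y ∧ C.sem I y
  | .all r C => fun x => ∀ y, I.rI r x y → C.sem I y

/-- A comparison extended with the nominal condition. -/
def IsComparisonNom {CN RN IN D D' : Type} (I : Interp CN RN IN D) (I' : Interp CN RN IN D')
    (Z : D → D' → Prop) : Prop :=
  (∀ A x x', Z x x' → I.cI A x → I'.cI A x') ∧
  (∀ r x x' y, Z x x' → I.rI r x y → ∃ y', Z y y' ∧ I'.rI r x' y') ∧
  (∀ r x x' y', Z x x' → I'.rI r x' y' → ∃ y, Z y y' ∧ I.rI r x y) ∧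
  (∀ (a : IN) x x', Z x x' → x = I.iI a → x' = I'.iI a)

theorem spo_preserved_general {CN RN IN D D' : Type}
    (I : Interp CN RN IN D) (I' : Interp CN RN IN D') (Z : D → D' → Prop)
    (hZ : IsComparisonNom I I' Z) :
    ∀ (C : SPO CN RN IN) (x : D) (x' : D'), Z x x' → C.sem I x → C.sem I' x' := by
  obtain ⟨h_atom, h_forth, h_back, h_nom⟩ := hZ
  intro C
  induction C with
  | top => exact fun _ _ _ _ => trivial
  | bot => exact fun _ _ _ h => h
  | atom A => exact h_atom A
  | nom a => exact h_nom a
  | or C₁ C₂ ih₁ ih₂ => exact fun x x' hxx' => Or.imp (ih₁ x x' hxx') (ih₂ x x' hxx')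
  | and C₁ C₂ ih₁ ih₂ => exact fun x x' hxx' => And.imp (ih₁ x x' hxx') (ih₂ x x' hxx')
  | ex r C ih =>
    rintro x x' hxx' ⟨y, hxy, hy⟩
    obtain ⟨y', hyy', hx'y'⟩ := h_forth r x x' y hxx' hxy
    exact ⟨y', hx'y', ih y y' hyy' hy⟩
  | all r C ih =>
    intro x x' hxx' h y' hx'y'
    obtain ⟨y, hyy', hxy⟩ := h_back r x x' y' hxx' hx'y'
    exact ih y y' hyy' (h y hxy)

/-- Comparisons with the nominal condition preserve semi-positive concepts
extended with nominals. -/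
theorem spo_preserved {CN RN IN D D' : Type} [Nonempty D] [Nonempty D']
    (I : Interp CN RN IN D) (I' : Interp CN RN IN D') (Z : D → D' → Prop)
    (hZ : IsComparisonNom I I' Z) :
    ∀ (C : SPO CN RN IN) (x : D) (x' : D'), Z x x' → C.sem I x → C.sem I' x' :=
  spo_preserved_general I I' Z hZ
end

section
/- Hennessy–Milner theorem for comparisons: Let I and I' be finitely branching interpretations such that a^I ≤sp a^{I'} for every individual name a. Then for all x ∈ Δ^I and x' ∈ Δ^{I'}: x ≤sp x' if and only if there exists a comparison Z between I and I' with Z(x,x'). In particular, the relation {(x,x') | x ≤sp x'} is itself a comparison between I and I'. -/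
inductive SP (CN RN : Type) : Type where
  | top : SP CN RN
  | bot : SP CN RN
  | atom : CN → SP CN RN
  | or : SP CN RN → SP CN RN → SP CN RN
  | and : SP CN RN → SP CN RN → SP CN RN
  | ex : RN → SP CN RN → SP CN RN
  | all : RN → SP CN RN → SP CN RN

def SP.sem {CN RN IN D : Type} (I : Interp CN RN IN D) : SP CN RN → D → Prop
  | .top => fun _ => True
  | .bot => fun _ => False
  | .atom A => I.cI A
  | .or C₁ C₂ => fun x => C₁.sem I x ∨ C₂.sem I x
  | .and C₁ C₂ => fun x => C₁.sem I x ∧ C₂.sem I x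
  | .ex r C => fun x => ∃ y, I.rI r x y ∧ C.sem I y
  | .all r C => fun x => ∀ y, I.rI r x y → C.sem I y

def FinBranching {CN RN IN D : Type} (I : Interp CN RN IN D) : Prop :=
  ∀ (r : RN) (x : D), {y | I.rI r x y}.Finite

def LeSP {CN RN IN D D' : Type} (I : Interp CN RN IN D) (I' : Interp CN RN IN D')
    (x : D) (x' : D') : Prop :=
  ∀ C : SP CN RN, C.sem I x → C.sem I' x'

def IsComparison {CN RN IN D D' : Type} (I : Interp CN RN IN D) (I' : Interp CN RN IN D')
    (Z : D → D' → Prop) : Prop :=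
  (∀ a, Z (I.iI a) (I'.iI a)) ∧
  (∀ A x x', Z x x' → I.cI A x → I'.cI A x') ∧
  (∀ r x x' y, Z x x' → I.rI r x y → ∃ y', Z y y' ∧ I'.rI r x' y') ∧
  (∀ r x x' y', Z x x' → I'.rI r x' y' → ∃ y, Z y y' ∧ I.rI r x y)

/-!
Semi-positive concepts are preserved along any comparison, by induction on the concept.
Conversely, `≤sp` has the forth property under finite branching: if no `r`-successor of `x'`
lies `≤sp`-above the successor `y` of `x`, choose for each of the finitely many successors `y'`
a concept true at `y` and false at `y'`; then `∃r.` of their conjunction holds at `x` but not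
at `x'`. The back property is dual, with `∀r.` of a disjunction.
-/

section

variable {CN RN IN D D' : Type} {I : Interp CN RN IN D} {I' : Interp CN RN IN D'}

lemma not_leSP_iff {x : D} {x' : D'} :
    ¬ LeSP I I' x x' ↔ ∃ C : SP CN RN, C.sem I x ∧ ¬ C.sem I' x' := by
  simp only [LeSP, not_forall, exists_prop]

lemma IsComparison.leSP {Z : D → D' → Prop} (hZ : IsComparison I I' Z) {x : D} {x' : D'}
    (hxx' : Z x x') : LeSP I I' x x' := by
  obtain ⟨-, hatom, hforth, hback⟩ := hZ
  intro C
  induction C generalizing x x' with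
  | top => exact fun _ => trivial
  | bot => exact id
  | atom A => exact hatom A x x' hxx'
  | or C₁ C₂ ih₁ ih₂ => exact Or.imp (ih₁ hxx') (ih₂ hxx')
  | and C₁ C₂ ih₁ ih₂ => exact And.imp (ih₁ hxx') (ih₂ hxx')
  | ex r C ih =>
    rintro ⟨y, hxy, hCy⟩
    obtain ⟨y', hyy', hx'y'⟩ := hforth r x x' y hxx' hxy
    exact ⟨y', hx'y', ih hyy' hCy⟩
  | all r C ih =>
    intro hC y' hx'y'
    obtain ⟨y, hyy', hxy⟩ := hback r x x' y' hxx' hx'y'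
    exact ih hyy' (hC y hxy)

lemma exists_sem_forall_not_sem_of_finite {s : Set D'} (hs : s.Finite) {y : D}
    (h : ∀ y' ∈ s, ¬ LeSP I I' y y') :
    ∃ C : SP CN RN, C.sem I y ∧ ∀ y' ∈ s, ¬ C.sem I' y' := by
  induction s, hs using Set.Finite.induction_on with
  | empty => exact ⟨.top, trivial, by simp⟩
  | @insert a s _ _ ih =>
    obtain ⟨C, hCy, hC⟩ := ih fun y' hy' => h y' (Set.mem_insert_of_mem a hy')
    obtain ⟨E, hEy, hEa⟩ := not_leSP_iff.mp (h a (Set.mem_insert a s))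
    refine ⟨.and C E, ⟨hCy, hEy⟩, ?_⟩
    rintro y' (rfl | hy') ⟨hCy', hEy'⟩
    exacts [hEa hEy', hC y' hy' hCy']

lemma exists_forall_sem_not_sem_of_finite {s : Set D} (hs : s.Finite) {y' : D'}
    (h : ∀ y ∈ s, ¬ LeSP I I' y y') :
    ∃ C : SP CN RN, (∀ y ∈ s, C.sem I y) ∧ ¬ C.sem I' y' := by
  induction s, hs using Set.Finite.induction_on with
  | empty => exact ⟨.bot, by simp, id⟩
  | @insert a s _ _ ih =>
    obtain ⟨C, hC, hCy'⟩ := ih fun y hy => h y (Set.mem_insert_of_mem a hy)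
    obtain ⟨E, hEa, hEy'⟩ := not_leSP_iff.mp (h a (Set.mem_insert a s))
    refine ⟨.or C E, ?_, fun hy' => hy'.elim hCy' hEy'⟩
    rintro y (rfl | hy)
    exacts [Or.inr hEa, Or.inl (hC y hy)]

lemma LeSP.forth (hfin' : FinBranching I') {r : RN} {x y : D} {x' : D'}
    (hxx' : LeSP I I' x x') (hxy : I.rI r x y) : ∃ y', LeSP I I' y y' ∧ I'.rI r x' y' := by
  by_contra! h
  obtain ⟨C, hCy, hC⟩ :=
    exists_sem_forall_not_sem_of_finite (hfin' r x') fun y' hx'y' hyy' => h y' hyy' hx'y'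
  obtain ⟨y', hx'y', hCy'⟩ := hxx' (.ex r C) ⟨y, hxy, hCy⟩
  exact hC y' hx'y' hCy'

lemma LeSP.back (hfin : FinBranching I) {r : RN} {x : D} {x' y' : D'}
    (hxx' : LeSP I I' x x') (hx'y' : I'.rI r x' y') : ∃ y, LeSP I I' y y' ∧ I.rI r x y := by
  by_contra! h
  obtain ⟨C, hC, hCy'⟩ :=
    exists_forall_sem_not_sem_of_finite (hfin r x) fun y hxy hyy' => h y hyy' hxy
  exact hCy' (hxx' (.all r C) hC y' hx'y')

lemma isComparison_leSP (hfin : FinBranching I) (hfin' : FinBranching I')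
    (hind : ∀ a : IN, LeSP I I' (I.iI a) (I'.iI a)) :
    IsComparison I I' (LeSP I I') :=
  ⟨hind, fun A _ _ hxx' => hxx' (.atom A), fun _ _ _ _ hxx' => hxx'.forth hfin',
    fun _ _ _ _ hxx' => hxx'.back hfin⟩

end

theorem hm_comparison_general {CN RN IN D D' : Type}
    (I : Interp CN RN IN D) (I' : Interp CN RN IN D')
    (hfin : FinBranching I) (hfin' : FinBranching I')
    (hind : ∀ a : IN, LeSP I I' (I.iI a) (I'.iI a)) :
    (∀ (x : D) (x' : D'),
      LeSP I I' x x' ↔ ∃ Z, IsComparison I I' Z ∧ Z x x') ∧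
    IsComparison I I' (fun x x' => LeSP I I' x x') := by
  have hcomp := isComparison_leSP hfin hfin' hind
  exact ⟨fun x x' => ⟨fun hxx' => ⟨_, hcomp, hxx'⟩, fun ⟨_, hZ, hxx'⟩ => hZ.leSP hxx'⟩, hcomp⟩

/-- Hennessy–Milner theorem for comparisons: in finitely branching
interpretations with `a^I ≤sp a^{I'}` for all individual names, `x ≤sp x'`
iff some comparison relates `x` to `x'`; moreover `≤sp` itself is a
comparison. -/
theorem hm_comparison {CN RN IN D D' : Type} [Nonempty D] [Nonempty D']
    (I : Interp CN RN IN D) (I' : Interp CN RN IN D')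
    (hfin : FinBranching I) (hfin' : FinBranching I')
    (hind : ∀ a : IN, LeSP I I' (I.iI a) (I'.iI a)) :
    (∀ (x : D) (x' : D'),
      LeSP I I' x x' ↔ ∃ Z, IsComparison I I' Z ∧ Z x x') ∧
    IsComparison I I' (fun x x' => LeSP I I' x x') :=
  hm_comparison_general I I' hfin hfin' hind
end

section
/- Hennessy–Milner theorem for positive concepts with seriality: Let I and I' be finitely branching interpretations with I serial (every element has at least one r-successor for every role name r), and suppose a^I ≤p a^{I'} for every individual name a, where ≤p means preservation of all positive concepts (semi-positive without ⊥). Then for all x, x': x ≤p x' iff there exists a comparison Z between I and I' with Z(x,x'). -/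
/-- Positive concepts (no ⊥). -/
inductive Pos (CN RN : Type) : Type where
  | top : Pos CN RN
  | atom : CN → Pos CN RN
  | or : Pos CN RN → Pos CN RN → Pos CN RN
  | and : Pos CN RN → Pos CN RN → Pos CN RN
  | ex : RN → Pos CN RN → Pos CN RN
  | all : RN → Pos CN RN → Pos CN RN

def Pos.sem {CN RN IN D : Type} (I : Interp CN RN IN D) : Pos CN RN → D → Prop
  | .top => fun _ => True
  | .atom A => I.cI A
  | .or C₁ C₂ => fun x => C₁.sem I x ∨ C₂.sem I x
  | .and C₁ C₂ => fun x => C₁.sem I x ∧ C₂.sem I x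
  | .ex r C => fun x => ∃ y, I.rI r x y ∧ C.sem I y
  | .all r C => fun x => ∀ y, I.rI r x y → C.sem I y

/-- `I` is serial: every element has an `r`-successor for every role name. -/
def Serial {CN RN IN D : Type} (I : Interp CN RN IN D) : Prop :=
  ∀ (x : D) (r : RN), ∃ y, I.rI r x y

/-- `x ≤p x'`: every positive concept true at `x` is true at `x'`. -/
def LeP {CN RN IN D D' : Type} (I : Interp CN RN IN D) (I' : Interp CN RN IN D')
    (x : D) (x' : D') : Prop :=
  ∀ C : Pos CN RN, C.sem I x → C.sem I' x'

/-! A comparison preserves positive concepts by induction on the concept: `∃r.C` uses the forth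
condition and `∀r.C` the back condition. Conversely, `≤p` itself is a comparison. If some
`r`-successor `y` of `x` had no `≤p`-larger `r`-successor of `x'`, each of the finitely many
`r`-successors of `x'` would miss a concept true at `y`; their conjunction `C` gives `∃r.C` at `x`
but not at `x'`. Dually, if some `r`-successor `y'` of `x'` were above no `r`-successor of `x`, the
disjunction `C` of concepts separating each `r`-successor of `x` from `y'` gives `∀r.C` at `x`
but not at `x'`; seriality makes that disjunction nonempty, which is where `⊥` is usually needed. -/

section

variable {CN RN IN D D' : Type} {I : Interp CN RN IN D} {I' : Interp CN RN IN D'}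

namespace Pos

theorem exists_sem_and_forall_not_sem {y : D} {S : Set D'} (hS : S.Finite)
    (h : ∀ y' ∈ S, ∃ C : Pos CN RN, C.sem I y ∧ ¬ C.sem I' y') :
    ∃ C : Pos CN RN, C.sem I y ∧ ∀ y' ∈ S, ¬ C.sem I' y' := by
  induction S, hS using Set.Finite.induction_on with
  | empty => exact ⟨.top, trivial, by simp⟩
  | @insert a S _ _ ih =>
    obtain ⟨Ca, hCa, hCa'⟩ := h a (Set.mem_insert a S)
    obtain ⟨C, hC, hC'⟩ := ih fun y' hy' => h y' (Set.mem_insert_of_mem a hy')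
    refine ⟨.and Ca C, ⟨hCa, hC⟩, ?_⟩
    rintro y' (rfl | hy') ⟨hCa'', hC''⟩
    exacts [hCa' hCa'', hC' y' hy' hC'']

theorem exists_forall_sem_and_not_sem {y' : D'} {S : Set D} (hS : S.Finite)
    (h₀ : ∃ C : Pos CN RN, ¬ C.sem I' y')
    (h : ∀ y ∈ S, ∃ C : Pos CN RN, C.sem I y ∧ ¬ C.sem I' y') :
    ∃ C : Pos CN RN, (∀ y ∈ S, C.sem I y) ∧ ¬ C.sem I' y' := by
  induction S, hS using Set.Finite.induction_on with
  | empty => obtain ⟨C, hC⟩ := h₀; exact ⟨C, by simp, hC⟩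
  | @insert a S _ _ ih =>
    obtain ⟨Ca, hCa, hCa'⟩ := h a (Set.mem_insert a S)
    obtain ⟨C, hC, hC'⟩ := ih fun y hy => h y (Set.mem_insert_of_mem a hy)
    refine ⟨.or Ca C, ?_, ?_⟩
    · rintro y (rfl | hy)
      exacts [Or.inl hCa, Or.inr (hC y hy)]
    · rintro (hCa'' | hC'')
      exacts [hCa' hCa'', hC' hC'']

end Pos

namespace LeP

theorem not_iff {x : D} {x' : D'} :
    ¬ LeP I I' x x' ↔ ∃ C : Pos CN RN, C.sem I x ∧ ¬ C.sem I' x' := by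
  simp only [LeP, not_forall, exists_prop]

theorem exists_forth {r : RN} {x y : D} {x' : D'} (hfin : {y' | I'.rI r x' y'}.Finite)
    (hxx' : LeP I I' x x') (hr : I.rI r x y) : ∃ y', LeP I I' y y' ∧ I'.rI r x' y' := by
  by_contra! hcon
  obtain ⟨C, hC, hC'⟩ := Pos.exists_sem_and_forall_not_sem hfin
    fun y' hr' => not_iff.1 fun hyy' => hcon y' hyy' hr'
  obtain ⟨y', hr', hCy'⟩ := hxx' (.ex r C) ⟨y, hr, hC⟩
  exact hC' y' hr' hCy'

theorem exists_back {r : RN} {x : D} {x' y' : D'} (hfin : {y | I.rI r x y}.Finite)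
    (hser : ∃ y, I.rI r x y) (hxx' : LeP I I' x x') (hr' : I'.rI r x' y') :
    ∃ y, LeP I I' y y' ∧ I.rI r x y := by
  by_contra! hcon
  have hsep : ∀ y ∈ {y | I.rI r x y}, ∃ C : Pos CN RN, C.sem I y ∧ ¬ C.sem I' y' :=
    fun y hr => not_iff.1 fun hyy' => hcon y hyy' hr
  obtain ⟨y₀, hr₀⟩ := hser
  obtain ⟨C₀, -, hC₀'⟩ := hsep y₀ hr₀
  obtain ⟨C, hC, hC'⟩ := Pos.exists_forall_sem_and_not_sem hfin ⟨C₀, hC₀'⟩ hsep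
  exact hC' (hxx' (.all r C) hC y' hr')

end LeP

theorem isComparison_leP (hind : ∀ a : IN, LeP I I' (I.iI a) (I'.iI a))
    (hfin : FinBranching I) (hfin' : FinBranching I') (hser : Serial I) :
    IsComparison I I' (LeP I I') :=
  ⟨hind, fun A _ _ hxx' hA => hxx' (.atom A) hA,
    fun r _ _ _ hxx' hr => hxx'.exists_forth (hfin' r _) hr,
    fun r x _ _ hxx' hr' => hxx'.exists_back (hfin r x) (hser x r) hr'⟩

theorem IsComparison.leP {Z : D → D' → Prop} (hZ : IsComparison I I' Z) {x : D} {x' : D'}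
    (hZx : Z x x') : LeP I I' x x' := by
  obtain ⟨-, hatom, hforth, hback⟩ := hZ
  intro C
  induction C generalizing x x' with
  | top => exact fun _ => trivial
  | atom A => exact hatom A x x' hZx
  | or C₁ C₂ ih₁ ih₂ => exact Or.imp (ih₁ hZx) (ih₂ hZx)
  | and C₁ C₂ ih₁ ih₂ => exact And.imp (ih₁ hZx) (ih₂ hZx)
  | ex r C ih =>
    rintro ⟨y, hr, hy⟩
    obtain ⟨y', hZy, hr'⟩ := hforth r x x' y hZx hr
    exact ⟨y', hr', ih hZy hy⟩
  | all r C ih =>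
    intro h y' hr'
    obtain ⟨y, hZy, hr⟩ := hback r x x' y' hZx hr'
    exact ih hZy (h y hr)

end

theorem hm_positive_serial_general {CN RN IN D D' : Type}
    (I : Interp CN RN IN D) (I' : Interp CN RN IN D')
    (hfin : FinBranching I) (hfin' : FinBranching I')
    (hser : Serial I)
    (hind : ∀ a : IN, LeP I I' (I.iI a) (I'.iI a)) :
    ∀ (x : D) (x' : D'),
      LeP I I' x x' ↔ ∃ Z, IsComparison I I' Z ∧ Z x x' :=
  fun _ _ => ⟨fun h => ⟨_, isComparison_leP hind hfin hfin' hser, h⟩,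
    fun ⟨_, hZ, hZx⟩ => hZ.leP hZx⟩

/-- Hennessy–Milner theorem for positive concepts with seriality. -/
theorem hm_positive_serial {CN RN IN D D' : Type} [Nonempty D] [Nonempty D']
    (I : Interp CN RN IN D) (I' : Interp CN RN IN D')
    (hfin : FinBranching I) (hfin' : FinBranching I')
    (hser : Serial I)
    (hind : ∀ a : IN, LeP I I' (I.iI a) (I'.iI a)) :
    ∀ (x : D) (x' : D'),
      LeP I I' x x' ↔ ∃ Z, IsComparison I I' Z ∧ Z x x' :=
  hm_positive_serial_general I I' hfin hfin' hser hind
end
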